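/- For every nonnegative integer n, the sum of the non-overlined parts counted without multiplicity (i.e., the sum over all overpartitions of n of the sum of the distinct sizes occurring among the non-overlined parts) equals ∑_{j=1}^{n} j · p̄(n−j). -/

import Mathlib

/-- An overpartition of `n`: a pair consisting of a multiset of overlined parts (pairwise
distinct) and a multiset of non-overlined parts, all parts positive, with total sum `n`. -/
structure Overpartition (n : ℕ) where
  overlined : Multiset ℕ
  nonoverlined : Multiset ℕ
  overlined_nodup : overlined.Nodup
  overlined_pos : ∀ i ∈ overlined, 0 < i
  nonoverlined_pos : ∀ i ∈ nonoverlined, 0 < i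
  parts_sum : overlined.sum + nonoverlined.sum = n

/-- There are only finitely many overpartitions of `n`. -/
instance (n : ℕ) : Finite (Overpartition n) := by
  classical
  set big : Multiset ℕ := n • ((Multiset.range (n + 1))) with hbig
  have key : ∀ (m : Multiset ℕ), (∀ i ∈ m, 0 < i) → m.sum ≤ n → m ≤ big := by
    intro m hpos hsum
    rw [Multiset.le_iff_count]
    intro a
    rw [hbig, Multiset.count_nsmul]
    by_cases ha : a ∈ m
    · have ha1 : 0 < a := hpos a ha
      have hale : a ≤ m.sum := Multiset.le_sum_of_mem ha
      have hcard : m.card ≤ m.sum := by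
        have := Multiset.card_nsmul_le_sum (s := m) (a := 1) (fun i hi => hpos i hi)
        simpa using this
      have hcnt : m.count a ≤ m.card := Multiset.count_le_card a m
      have haa : a ∈ Multiset.range (n + 1) := Multiset.mem_range.2 (by omega)
      have h1 : Multiset.count a (Multiset.range (n + 1)) = 1 :=
        Multiset.count_eq_one_of_mem (Multiset.nodup_range _) haa
      rw [h1]
      omega
    · simp [Multiset.count_eq_zero_of_notMem ha]
  have hinj : Function.Injective (fun o : Overpartition n =>
      ((⟨o.overlined, Multiset.mem_powerset.2
          (key _ o.overlined_pos (by have := o.parts_sum; omega))⟩,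
        ⟨o.nonoverlined, Multiset.mem_powerset.2
          (key _ o.nonoverlined_pos (by have := o.parts_sum; omega))⟩) :
        {m // m ∈ big.powerset} × {m // m ∈ big.powerset})) := by
    intro a b h
    cases a; cases b
    simp_all
  exact Finite.of_injective _ hinj

/-- `S k n`: the total number of non-overlined parts equal to `k`, counted with
multiplicity, in all the overpartitions of `n`. -/
noncomputable def S (k n : ℕ) : ℕ := ∑ᶠ o : Overpartition n, o.nonoverlined.count k

/-- `pbar n`: the number of overpartitions of `n` (`pbar 0 = 1`). -/
noncomputable def pbar (n : ℕ) : ℕ := Nat.card (Overpartition n)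

/-- The multiset of all parts (overlined and non-overlined) of an overpartition. -/
def Overpartition.parts {n : ℕ} (o : Overpartition n) : Multiset ℕ :=
  o.overlined + o.nonoverlined

/-- `Mbar k n`: the number of overpartitions of `n` in which the first (i.e. largest) part
larger than `k` appears at least `k + 1` times. -/
noncomputable def Mbar (k n : ℕ) : ℕ :=
  Nat.card {o : Overpartition n // ∃ s ∈ o.parts, k < s ∧
    (∀ t ∈ o.parts, k < t → t ≤ s) ∧ k + 1 ≤ o.parts.count s}

/-!
Exchanging the two sums, the left side is `∑ j, j · #{o ⊢ n | j is a non-overlined part of o}`.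
Removing one non-overlined copy of `j` is a bijection from these overpartitions of `n` onto the
overpartitions of `n - j`, so each count is `p̄(n - j)`.
-/

namespace Overpartition

variable {n : ℕ}

theorem ext {a b : Overpartition n} (h₁ : a.overlined = b.overlined)
    (h₂ : a.nonoverlined = b.nonoverlined) : a = b := by
  cases a; cases b; subst h₁ h₂; rfl

theorem le_of_mem_nonoverlined (o : Overpartition n) {s : ℕ} (hs : s ∈ o.nonoverlined) :
    s ≤ n := by
  have := Multiset.le_sum_of_mem hs
  have := o.parts_sum
  omega

def eraseNonoverlined (o : Overpartition n) {j : ℕ} (hj : j ∈ o.nonoverlined) :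
    Overpartition (n - j) where
  overlined := o.overlined
  nonoverlined := o.nonoverlined.erase j
  overlined_nodup := o.overlined_nodup
  overlined_pos := o.overlined_pos
  nonoverlined_pos i hi := o.nonoverlined_pos i (Multiset.mem_of_mem_erase hi)
  parts_sum := by
    have h := congrArg Multiset.sum (Multiset.cons_erase hj)
    rw [Multiset.sum_cons] at h
    have := o.parts_sum
    omega

def consNonoverlined {j : ℕ} (hj : 0 < j) (hjn : j ≤ n) (p : Overpartition (n - j)) :
    Overpartition n where
  overlined := p.overlined
  nonoverlined := j ::ₘ p.nonoverlined
  overlined_nodup := p.overlined_nodup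
  overlined_pos := p.overlined_pos
  nonoverlined_pos i hi := by
    rcases Multiset.mem_cons.1 hi with rfl | hi
    · exact hj
    · exact p.nonoverlined_pos i hi
  parts_sum := by
    rw [Multiset.sum_cons]
    have := p.parts_sum
    omega

def nonoverlinedMemEquiv {j : ℕ} (hj : 0 < j) (hjn : j ≤ n) :
    {o : Overpartition n // j ∈ o.nonoverlined} ≃ Overpartition (n - j) where
  toFun o := o.1.eraseNonoverlined o.2
  invFun p := ⟨consNonoverlined hj hjn p, Multiset.mem_cons_self _ _⟩
  left_inv o := Subtype.ext (ext rfl (Multiset.cons_erase o.2))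
  right_inv _ := ext rfl (Multiset.erase_cons_head _ _)

theorem card_nonoverlined_mem {j : ℕ} (hj : 0 < j) (hjn : j ≤ n) :
    Nat.card {o : Overpartition n // j ∈ o.nonoverlined} = pbar (n - j) :=
  Nat.card_congr (nonoverlinedMemEquiv hj hjn)

theorem sum_toFinset_nonoverlined (o : Overpartition n) :
    ∑ s ∈ o.nonoverlined.toFinset, s
      = ∑ j ∈ Finset.Icc 1 n, if j ∈ o.nonoverlined then j else 0 := by
  rw [← Finset.sum_filter]
  congr 1
  ext s
  simp only [Finset.mem_filter, Finset.mem_Icc, Multiset.mem_toFinset]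
  exact ⟨fun hs => ⟨⟨o.nonoverlined_pos s hs, o.le_of_mem_nonoverlined hs⟩, hs⟩, And.right⟩

end Overpartition

theorem stmt8 (n : ℕ) :
    (∑ᶠ o : Overpartition n, ∑ s ∈ o.nonoverlined.toFinset, s)
      = ∑ j ∈ Finset.Icc 1 n, j * pbar (n - j) := by
  have := Fintype.ofFinite (Overpartition n)
  rw [finsum_eq_sum_of_fintype]
  simp_rw [Overpartition.sum_toFinset_nonoverlined]
  rw [Finset.sum_comm]
  refine Finset.sum_congr rfl fun j hj => ?_
  obtain ⟨hj, hjn⟩ := Finset.mem_Icc.1 hj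
  rw [← Finset.sum_filter, Finset.sum_const, smul_eq_mul, mul_comm, ← Fintype.card_subtype,
    ← Nat.card_eq_fintype_card, Overpartition.card_nonoverlined_mem hj hjn]
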